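/- For every integer k ≥ 3, the function g_k(s) = h(s) - ρ_k s² (where h(s) = (1+s)log(1+s) - s and ρ_k = log(k-1)/(k-1)) is nonnegative on the interval [0, (k-2)/2]. -/

import Mathlib

noncomputable def h (t : ℝ) : ℝ := (1 + t) * Real.log (1 + t) - t

/-!
Since `log (1 + s) ≥ 2s/(2 + s)`, the ratio `h s / s²` decreases on `(0, ∞)`, so it suffices to
prove the bound at the right endpoint `s = (k - 2)/2`, where `1 + 2s = k - 1`. There it is the
inequality `s² log (1 + 2s) ≤ (1 + 2s) h(s)`, which we prove for all `s ≥ 1/2`. With `m = 1 + 2s`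
it compares `log m`, `log (m + 1)` and `log 2`; the slack is small (below 1% near `m = 5`).
Bounding `log (m + 1) - log m ≥ 2/(2m + 1)`, and `log m` from below by two terms of the series
`log (b/a) = 2 artanh ((b - a)/(b + a))` around `a = 2` for `m ≤ 4` and around `a = 4` for `m ≥ 4`,
leaves two polynomial inequalities, whose coefficients are nonnegative in the Bernstein basis of
`[2, 4]` and in powers of `m - 4`, respectively.
-/

open Real Set

theorem two_mul_add_le_log_sub_log {z : ℝ} (h0 : 0 ≤ z) (h1 : z < 1) :
    2 * z + 2 / 3 * z ^ 3 ≤ log (1 + z) - log (1 - z) := by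
  have hsum := hasSum_log_sub_log_of_abs_lt_one (abs_lt.2 ⟨by linarith, h1⟩)
  have := sum_le_hasSum (Finset.range 2) (fun k _ => by positivity) hsum
  norm_num [Finset.sum_range_succ] at this
  linarith

theorem log_add_le_log {a b : ℝ} (ha : 0 < a) (hab : a ≤ b) :
    log a + 2 * ((b - a) / (b + a)) + 2 / 3 * ((b - a) / (b + a)) ^ 3 ≤ log b := by
  have hb : 0 < b := ha.trans_le hab
  have hz := two_mul_add_le_log_sub_log (z := (b - a) / (b + a)) (by positivity)
    ((div_lt_one (by positivity)).2 (by linarith))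
  have h1 : 1 + (b - a) / (b + a) = 2 * b / (b + a) := by field_simp; ring
  have h2 : 1 - (b - a) / (b + a) = 2 * a / (b + a) := by field_simp; ring
  rw [h1, h2, ← log_div (by positivity) (by positivity),
    show 2 * b / (b + a) / (2 * a / (b + a)) = b / a by field_simp, log_div hb.ne' ha.ne'] at hz
  linarith

theorem hasDerivAt_h {t : ℝ} (ht : -1 < t) : HasDerivAt h (log (1 + t)) t := by
  have hpos : 1 + t ≠ 0 := by linarith
  have hlin : HasDerivAt (fun x : ℝ => 1 + x) 1 t := (hasDerivAt_id t).const_add 1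
  exact ((hlin.mul (hlin.log hpos)).sub (hasDerivAt_id t)).congr_deriv
    (by rw [mul_one_div_cancel hpos]; ring)

theorem h_div_sq_antitoneOn : AntitoneOn (fun s => h s / s ^ 2) (Ioi 0) := by
  have hderiv : ∀ s ∈ Ioi (0 : ℝ), HasDerivAt (fun s => h s / s ^ 2)
      ((log (1 + s) * s ^ 2 - h s * (2 * s)) / (s ^ 2) ^ 2) s := fun s (hs : 0 < s) =>
    ((hasDerivAt_h (by linarith)).div (hasDerivAt_pow 2 s) (by positivity)).congr_deriv
      (by norm_num)
  refine antitoneOn_of_hasDerivWithinAt_nonpos (convex_Ioi 0)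
    (fun s hs => (hderiv s hs).continuousAt.continuousWithinAt)
    (by simpa only [interior_Ioi] using fun s hs => (hderiv s hs).hasDerivWithinAt) ?_
  rw [interior_Ioi]
  intro s (hs : 0 < s)
  have hlog : 2 * s ≤ (2 + s) * log (1 + s) := by
    have h1 := log_add_le_log one_pos (by linarith : (1 : ℝ) ≤ 1 + s)
    rw [log_one, show 1 + s - 1 = s by ring, show 1 + s + 1 = 2 + s by ring] at h1
    have hcube : 0 ≤ 2 / 3 * (s / (2 + s)) ^ 3 := by positivity
    calc 2 * s = (2 + s) * (2 * (s / (2 + s))) := by field_simp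
      _ ≤ (2 + s) * log (1 + s) := mul_le_mul_of_nonneg_left (by linarith) (by positivity)
  refine div_nonpos_of_nonpos_of_nonneg ?_ (by positivity)
  simp only [h]
  linarith [mul_le_mul_of_nonneg_left hlog hs.le]

/-- `4 ((1 + 2s) h(s) - s² log (1 + 2s))` at `m = 1 + 2s`, with `log (1 + 1/m)` replaced by its
lower bound `2/(2m + 1)`. -/
noncomputable def gapLowerBound (m : ℝ) : ℝ :=
  2 * m * (m + 1) * (log m + 2 / (2 * m + 1) - log 2) - (m - 1) ^ 2 * log m - 2 * m * (m - 1)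

theorem gapLowerBound_nonneg_of_le_four {m : ℝ} (h2 : 2 ≤ m) (h4 : m ≤ 4) :
    0 ≤ gapLowerBound m := by
  have hlog := log_add_le_log two_pos h2
  have hrat : 0 ≤ (m ^ 2 + 4 * m - 1) * (2 * ((m - 2) / (m + 2)) + 2 / 3 * ((m - 2) / (m + 2)) ^ 3)
      + 4 * m * (m + 1) / (2 * m + 1) - (m - 1) ^ 2 * 0.6931471808 - 2 * m * (m - 1) := by
    have ha : 0 ≤ m - 2 := by linarith
    have hb : 0 ≤ 4 - m := by linarith
    field_simp
    linarith [mul_nonneg (pow_nonneg ha 0) (pow_nonneg hb 6),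
      mul_nonneg (pow_nonneg ha 1) (pow_nonneg hb 5), mul_nonneg (pow_nonneg ha 2) (pow_nonneg hb 4),
      mul_nonneg (pow_nonneg ha 3) (pow_nonneg hb 3), mul_nonneg (pow_nonneg ha 4) (pow_nonneg hb 2),
      mul_nonneg (pow_nonneg ha 5) (pow_nonneg hb 1), mul_nonneg (pow_nonneg ha 6) (pow_nonneg hb 0)]
  have hcoef : 0 ≤ m ^ 2 + 4 * m - 1 := by nlinarith
  have h2m : 2 * m * (m + 1) * (2 / (2 * m + 1)) = 4 * m * (m + 1) / (2 * m + 1) := by ring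
  unfold gapLowerBound
  linarith [mul_le_mul_of_nonneg_left hlog hcoef,
    mul_le_mul_of_nonneg_left log_two_lt_d9.le (sq_nonneg (m - 1))]

theorem gapLowerBound_nonneg_of_four_le {m : ℝ} (h4 : 4 ≤ m) : 0 ≤ gapLowerBound m := by
  have hlog := log_add_le_log four_pos h4
  rw [show log 4 = 2 * log 2 by rw [← log_rpow two_pos]; norm_num] at hlog
  have hrat : 0 ≤ (m ^ 2 + 4 * m - 1) * (2 * ((m - 4) / (m + 4)) + 2 / 3 * ((m - 4) / (m + 4)) ^ 3)
      + 4 * m * (m + 1) / (2 * m + 1) + (6 * m - 2) * 0.6931471803 - 2 * m * (m - 1) := by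
    have ha : 0 ≤ m - 4 := by linarith
    field_simp
    linarith [pow_nonneg ha 2, pow_nonneg ha 3, pow_nonneg ha 4, pow_nonneg ha 5, pow_nonneg ha 6]
  have hcoef : 0 ≤ m ^ 2 + 4 * m - 1 := by nlinarith
  have h2m : 2 * m * (m + 1) * (2 / (2 * m + 1)) = 4 * m * (m + 1) / (2 * m + 1) := by ring
  unfold gapLowerBound
  linarith [mul_le_mul_of_nonneg_left hlog hcoef,
    mul_le_mul_of_nonneg_left log_two_gt_d9.le (by linarith : (0 : ℝ) ≤ 6 * m - 2)]

theorem gapLowerBound_nonneg {m : ℝ} (hm : 2 ≤ m) : 0 ≤ gapLowerBound m :=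
  (le_total m 4).elim (gapLowerBound_nonneg_of_le_four hm) gapLowerBound_nonneg_of_four_le

theorem log_div_le_h_div_sq {s : ℝ} (hs : 1 / 2 ≤ s) :
    log (1 + 2 * s) / (1 + 2 * s) ≤ h s / s ^ 2 := by
  have hgap := gapLowerBound_nonneg (by linarith : 2 ≤ 1 + 2 * s)
  have hstep := log_add_le_log (by linarith : 0 < 1 + 2 * s) (le_add_of_nonneg_right zero_le_one)
  have hnext : log (1 + 2 * s) + 2 / (2 * (1 + 2 * s) + 1) ≤ log (1 + 2 * s + 1) := by
    rw [show 1 + 2 * s + 1 - (1 + 2 * s) = 1 by ring,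
      show 1 + 2 * s + 1 + (1 + 2 * s) = 2 * (1 + 2 * s) + 1 by ring] at hstep
    have : 0 ≤ 2 / 3 * (1 / (2 * (1 + 2 * s) + 1)) ^ 3 := by positivity
    linarith [mul_one_div (2 : ℝ) (2 * (1 + 2 * s) + 1)]
  have hhalf : log (1 + s) = log (1 + 2 * s + 1) - log 2 := by
    rw [← log_div (by linarith) two_ne_zero]; ring_nf
  rw [div_le_div_iff₀ (by linarith) (by positivity)]
  unfold gapLowerBound at hgap
  simp only [h, hhalf]
  linarith [mul_le_mul_of_nonneg_left hnext (by positivity : (0 : ℝ) ≤ (1 + 2 * s) * (1 + s))]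

theorem g_nonneg (k : ℕ) (hk : 3 ≤ k) (s : ℝ) (hs0 : 0 ≤ s)
    (hs1 : s ≤ ((k : ℝ) - 2) / 2) :
    0 ≤ h s - (Real.log ((k : ℝ) - 1) / ((k : ℝ) - 1)) * s ^ 2 := by
  rcases hs0.eq_or_lt with rfl | hs
  · simp [h]
  have hk' : (3 : ℝ) ≤ k := by exact_mod_cast hk
  have hρ : log ((k : ℝ) - 1) / ((k : ℝ) - 1) ≤ h s / s ^ 2 := by
    rw [show (k : ℝ) - 1 = 1 + 2 * (((k : ℝ) - 2) / 2) by ring]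
    exact (log_div_le_h_div_sq (by linarith)).trans
      (h_div_sq_antitoneOn hs (by simp only [mem_Ioi]; linarith) hs1)
  rw [le_div_iff₀ (by positivity)] at hρ
  linarith
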